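/- The cardinality of the type class T_q of a type q with denominator m on alphabet Fin k satisfies |T_q| ≥ (m+1)^{−k} · exp(m·H(q)), where H(q) is the Shannon entropy of q in nats. -/
import Mathlib


open Finset
open scoped Classical

section Aux
open MvPolynomial

lemma fact_le_fact_mul_pow' : ∀ (e d : ℕ), (d + e).factorial ≤ d.factorial * (d + e) ^ e
  | 0, d => by simp
  | e + 1, d => by
    calc (d + (e+1)).factorial = (d + e + 1) * (d + e).factorial := by
          rw [← Nat.add_assoc, Nat.factorial_succ]
      _ ≤ (d + e + 1) * (d.factorial * (d + e) ^ e) :=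
          Nat.mul_le_mul_left _ (fact_le_fact_mul_pow' e d)
      _ ≤ (d + e + 1) * (d.factorial * (d + e + 1) ^ e) := by
          exact Nat.mul_le_mul_left _ (Nat.mul_le_mul_left _
            (Nat.pow_le_pow_left (Nat.le_succ _) _))
      _ = d.factorial * (d + (e+1)) ^ (e+1) := by ring

lemma fact_pow_aux' (c d : ℕ) : c.factorial * c ^ d ≤ d.factorial * c ^ c := by
  rcases le_total d c with h | h
  · calc c.factorial * c ^ d ≤ d.factorial * c ^ (c - d) * c ^ d := by
          refine Nat.mul_le_mul_right _ ?_
          have := fact_le_fact_mul_pow' (c - d) d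
          rwa [Nat.add_sub_cancel' h] at this
      _ = d.factorial * c ^ c := by rw [mul_assoc, ← pow_add, Nat.sub_add_cancel h]
  · calc c.factorial * c ^ d = c.factorial * c ^ (d - c) * c ^ c := by
          rw [mul_assoc, ← pow_add, Nat.sub_add_cancel h]
      _ ≤ d.factorial * c ^ c := Nat.mul_le_mul_right _ (by
          calc c.factorial * c ^ (d - c) ≤ c.factorial * (c+1) ^ (d - c) :=
                Nat.mul_le_mul_left _ (Nat.pow_le_pow_left (Nat.le_succ c) _)
            _ ≤ (c + (d - c)).factorial := Nat.factorial_mul_pow_le_factorial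
            _ = d.factorial := by rw [Nat.add_sub_cancel' h])


noncomputable def DD {k : ℕ} (d : Fin k → ℕ) : Fin k →₀ ℕ := Finsupp.equivFunOnFinite.symm d

lemma DD_inj {k : ℕ} {d c : Fin k → ℕ} : DD d = DD c ↔ d = c := by
  unfold DD
  exact Finsupp.equivFunOnFinite.symm.injective.eq_iff

lemma key_monomial {k : ℕ} (d : Fin k → ℕ) :
    (∏ i, (X i : MvPolynomial (Fin k) ℕ) ^ d i) = monomial (DD d) 1 := by
  rw [← prod_X_pow_eq_monomial]
  refine (Finset.prod_subset (Finset.subset_univ _) ?_).symm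
  · intro i _ hi
    have : (DD d) i = 0 := by simpa using hi
    have hd : d i = 0 := by simpa [DD] using this
    simp [hd]

lemma card_type_class (k m : ℕ) (c : Fin k → ℕ) (hc : ∑ i, c i = m) :
    (univ.filter fun z : Fin m → Fin k =>
      ∀ i, (univ.filter fun j => z j = i).card = c i).card = Nat.multinomial univ c := by
  have expand1 : ((∑ i : Fin k, X i : MvPolynomial (Fin k) ℕ)) ^ m
      = ∑ z ∈ Fintype.piFinset (fun _ : Fin m => (univ : Finset (Fin k))),
          monomial (DD (fun i => (univ.filter fun j => z j = i).card)) 1 := by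
    have h1 : ((∑ i : Fin k, X i : MvPolynomial (Fin k) ℕ)) ^ m
        = ∏ _j : Fin m, (∑ i : Fin k, X i : MvPolynomial (Fin k) ℕ) := by
      simp
    rw [h1, Finset.prod_univ_sum]
    refine Finset.sum_congr rfl fun z _ => ?_
    rw [← key_monomial]
    rw [← Finset.prod_fiberwise Finset.univ z (fun j => (X (z j) : MvPolynomial (Fin k) ℕ))]
    refine Finset.prod_congr rfl fun i _ => ?_
    rw [Finset.prod_congr rfl (fun j hj => by
      rw [(Finset.mem_filter.1 hj).2] : ∀ j ∈ Finset.univ.filter (fun j => z j = i), _ = (X i : MvPolynomial (Fin k) ℕ))]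
    rw [Finset.prod_const]
  have expand2 : ((∑ i : Fin k, X i : MvPolynomial (Fin k) ℕ)) ^ m
      = ∑ c' ∈ piAntidiag Finset.univ m, monomial (DD c') (Nat.multinomial Finset.univ c') := by
    rw [Finset.sum_pow_eq_sum_piAntidiag]
    refine Finset.sum_congr rfl fun c' _ => ?_
    rw [key_monomial, ← map_natCast (C : ℕ →+* MvPolynomial (Fin k) ℕ), C_mul_monomial, mul_one]
    norm_num
  have hcoeff := congrArg (coeff (DD c)) (expand1.symm.trans expand2)
  rw [coeff_sum, coeff_sum] at hcoeff
  simp only [coeff_monomial, DD_inj] at hcoeff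
  rw [Finset.sum_ite_eq' (Finset.univ.piAntidiag m) c (fun x => Nat.multinomial Finset.univ x),
    if_pos (by simp [hc])] at hcoeff
  rw [← hcoeff]
  rw [Finset.card_filter, Fintype.piFinset_univ] at *
  refine Finset.sum_congr rfl fun z _ => ?_
  simp [funext_iff]

-- nat maximality
lemma nat_max_lemma {k : ℕ} (c c' : Fin k → ℕ) (h : ∑ i, c i = ∑ i, c' i) :
    Nat.multinomial Finset.univ c' * ∏ i, c i ^ c' i ≤
      Nat.multinomial Finset.univ c * ∏ i, c i ^ c i := by
  set M := Nat.multinomial Finset.univ c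
  set M' := Nat.multinomial Finset.univ c'
  have hM : (∏ i, (c i).factorial) * M = (∑ i, c i).factorial := Nat.multinomial_spec _ _
  have hM' : (∏ i, (c' i).factorial) * M' = (∑ i, c' i).factorial := Nat.multinomial_spec _ _
  have hpos : 0 < (∏ i, (c i).factorial) * (∏ i, (c' i).factorial) :=
    Nat.mul_pos (Finset.prod_pos fun i _ => Nat.factorial_pos _)
      (Finset.prod_pos fun i _ => Nat.factorial_pos _)
  refine Nat.le_of_mul_le_mul_left ?_ hpos
  calc (∏ i, (c i).factorial) * (∏ i, (c' i).factorial) * (M' * ∏ i, c i ^ c' i)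
      = ((∏ i, (c' i).factorial) * M') * ((∏ i, (c i).factorial) * ∏ i, c i ^ c' i) := by ring
    _ = (∑ i, c' i).factorial * ∏ i, ((c i).factorial * c i ^ c' i) := by
        rw [hM', Finset.prod_mul_distrib]
    _ ≤ (∑ i, c' i).factorial * ∏ i, ((c' i).factorial * c i ^ c i) := by
        exact Nat.mul_le_mul_left _ (Finset.prod_le_prod' fun i _ => fact_pow_aux' (c i) (c' i))
    _ = ((∏ i, (c i).factorial) * M) * ((∏ i, (c' i).factorial) * ∏ i, c i ^ c i) := by
        rw [hM, h, Finset.prod_mul_distrib]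
    _ = (∏ i, (c i).factorial) * (∏ i, (c' i).factorial) * (M * ∏ i, c i ^ c i) := by ring

end Aux

/-- Size of the type class: `|T_q| ≥ (m+1)^(-k) · exp(m·H(q))`. -/
theorem type_class_card_lower_bound (k m : ℕ) (hm : 0 < m)
    (q : Fin k → ℝ)
    (hq : ∀ i, 0 ≤ q i) (hqsum : ∑ i, q i = 1)
    (htype : ∀ i, ∃ c : ℕ, (m : ℝ) * q i = c) :
    ((m + 1 : ℝ) ^ k)⁻¹ * Real.exp ((m : ℝ) * (-∑ i, q i * Real.log (q i))) ≤
      ((Finset.univ.filter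
          (fun z : Fin m → Fin k =>
            ∀ i, ((Finset.univ.filter (fun j => z j = i)).card : ℝ) / m = q i)).card : ℝ) := by
  choose c hc using htype
  have hm' : (0:ℝ) < m := by exact_mod_cast hm
  have hqc : ∀ i, q i = (c i : ℝ) / m := by
    intro i
    rw [eq_div_iff hm'.ne']
    linarith [hc i]
  have hsum : ∑ i, c i = m := by
    have : ((∑ i, c i : ℕ) : ℝ) = m := by
      push_cast
      simp only [← hc, ← Finset.mul_sum, hqsum, mul_one]
    exact_mod_cast this
  have hqpos : ∀ i, c i ≠ 0 → 0 < q i := by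
    intro i h
    rw [hqc i]
    have : (0:ℝ) < c i := by exact_mod_cast Nat.pos_of_ne_zero h
    positivity
  set P := ∏ i, q i ^ c i with hP
  have hPpos : 0 < P := Finset.prod_pos fun i _ => by
    rcases eq_or_ne (c i) 0 with h | h
    · simp [h]
    · exact pow_pos (hqpos i h) _
  -- exp identity
  have hexp : Real.exp ((m:ℝ) * (-∑ i, q i * Real.log (q i))) * P = 1 := by
    have h1 : (m:ℝ) * (-∑ i, q i * Real.log (q i)) = ∑ i, -((c i:ℝ) * Real.log (q i)) := by
      rw [mul_neg, Finset.mul_sum, ← Finset.sum_neg_distrib]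
      refine Finset.sum_congr rfl fun i _ => ?_
      rw [← mul_assoc, hc i]
    rw [h1, Real.exp_sum, hP, ← Finset.prod_mul_distrib]
    refine Finset.prod_eq_one fun i _ => ?_
    rcases eq_or_ne (c i) 0 with h | h
    · simp [h]
    · have hq0 : 0 < q i := hqpos i h
      have h2 : q i ^ c i = Real.exp ((c i:ℝ) * Real.log (q i)) := by
        rw [← Real.log_pow, Real.exp_log (pow_pos hq0 _)]
      rw [h2, ← Real.exp_add, neg_add_cancel, Real.exp_zero]
  -- multinomial expansion of 1
  have hone : (1:ℝ) = ∑ c' ∈ Finset.univ.piAntidiag m,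
      (Nat.multinomial Finset.univ c' : ℝ) * ∏ i, q i ^ c' i := by
    have h := Finset.sum_pow_eq_sum_piAntidiag (Finset.univ : Finset (Fin k)) q m
    rw [hqsum, one_pow] at h
    exact h
  -- termwise bound
  have hterm : ∀ c' ∈ Finset.univ.piAntidiag m,
      (Nat.multinomial Finset.univ c' : ℝ) * ∏ i, q i ^ c' i ≤
        (Nat.multinomial Finset.univ c : ℝ) * P := by
    intro c' hc'
    rw [Finset.mem_piAntidiag] at hc'
    have hsum' : ∑ i, c' i = m := hc'.1
    have key : ∀ (d : Fin k → ℕ), (∑ i, d i = m) →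
        (∏ i, q i ^ d i) = (∏ i, (c i:ℝ) ^ d i) / (m:ℝ)^m := by
      intro d hd
      rw [eq_div_iff (by positivity : ((m:ℝ)^m) ≠ 0)]
      have hmm : (m:ℝ)^m = ∏ i, (m:ℝ)^(d i) := by
        rw [Finset.prod_pow_eq_pow_sum, hd]
      rw [hmm, ← Finset.prod_mul_distrib]
      refine Finset.prod_congr rfl fun i _ => ?_
      rw [hqc i, div_pow, div_mul_cancel₀ _ (by positivity : ((m:ℝ)^(d i)) ≠ 0)]
    rw [hP, key c' hsum', key c hsum, mul_div_assoc', mul_div_assoc']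
    rw [div_le_div_iff_of_pos_right (by positivity : (0:ℝ) < (m:ℝ)^m)]
    have hnat := nat_max_lemma c c' (hsum.trans hsum'.symm)
    exact_mod_cast hnat
  -- cardinality of the set of types
  have hcard : ((Finset.univ.piAntidiag m : Finset (Fin k → ℕ)).card : ℝ) ≤ (m+1:ℝ)^k := by
    have hsub : (Finset.univ.piAntidiag m : Finset (Fin k → ℕ)) ⊆
        Fintype.piFinset (fun _ : Fin k => Finset.range (m+1)) := by
      intro f hf
      rw [Finset.mem_piAntidiag] at hf
      rw [Fintype.mem_piFinset]
      intro i
      rw [Finset.mem_range, Nat.lt_succ_iff]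
      calc f i ≤ ∑ j, f j := Finset.single_le_sum (fun j _ => Nat.zero_le _) (Finset.mem_univ i)
        _ = m := hf.1
    have h2 := Finset.card_le_card hsub
    rw [Fintype.card_piFinset] at h2
    simp only [Finset.card_range, Finset.prod_const, Finset.card_univ, Fintype.card_fin] at h2
    have : ((Finset.univ.piAntidiag m : Finset (Fin k → ℕ)).card : ℝ) ≤ ((m+1:ℕ)^k : ℕ) := by
      exact_mod_cast h2
    calc _ ≤ (((m+1:ℕ)^k : ℕ) : ℝ) := this
      _ = (m+1:ℝ)^k := by push_cast; ring
  set M := Nat.multinomial Finset.univ c with hMdef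
  have hmain : (1:ℝ) ≤ (m+1:ℝ)^k * ((M : ℝ) * P) := by
    calc (1:ℝ) = ∑ c' ∈ Finset.univ.piAntidiag m,
          (Nat.multinomial Finset.univ c' : ℝ) * ∏ i, q i ^ c' i := hone
      _ ≤ ∑ _c' ∈ Finset.univ.piAntidiag m, (M:ℝ) * P := Finset.sum_le_sum hterm
      _ = ((Finset.univ.piAntidiag m).card : ℝ) * ((M:ℝ) * P) := by
          rw [Finset.sum_const, nsmul_eq_mul]
      _ ≤ (m+1:ℝ)^k * ((M:ℝ) * P) :=
          mul_le_mul_of_nonneg_right hcard (by positivity)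
  -- identify the filter set
  have hfilter : (Finset.univ.filter
      (fun z : Fin m → Fin k =>
        ∀ i, ((Finset.univ.filter (fun j => z j = i)).card : ℝ) / m = q i))
      = Finset.univ.filter
          (fun z : Fin m → Fin k => ∀ i, (Finset.univ.filter (fun j => z j = i)).card = c i) := by
    apply Finset.filter_congr
    intro z _
    refine forall_congr' fun i => ?_
    rw [hqc i, div_eq_div_iff hm'.ne' hm'.ne', mul_left_inj' hm'.ne']
    exact ⟨fun h => by exact_mod_cast h, fun h => by exact_mod_cast h⟩
  rw [hfilter, card_type_class k m c hsum, ← hMdef]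
  have hexp' : Real.exp ((m:ℝ) * (-∑ i, q i * Real.log (q i))) = P⁻¹ := by
    rw [inv_eq_one_div, eq_div_iff hPpos.ne']
    exact hexp
  rw [hexp', ← mul_inv, ← one_div, div_le_iff₀ (by positivity)]
  calc (1:ℝ) ≤ (m+1:ℝ)^k * ((M : ℝ) * P) := hmain
    _ = (M:ℝ) * ((m+1:ℝ)^k * P) := by ring
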